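/- Fix a continuous function Y : [0,T] → ℝ (with Y ≥ 0) and define K(s,t) = inf{Y_r : r ∈ [min(s,t), max(s,t)]} for s,t ∈ [0,T]. Then K is a symmetric positive semidefinite kernel on [0,T]. -/
import Mathlib


open Set


lemma sInf_image_sub (S : Set ℝ) (hne : S.Nonempty) (hbd : BddBelow S) (a : ℝ) :
    sInf ((fun x => x - a) '' S) = sInf S - a := by
  have : (fun x : ℝ => x - a) = ⇑(OrderIso.addRight (-a)) := by
    funext x; simp [sub_eq_add_neg]
  rw [this, ← OrderIso.map_csInf' _ hne hbd]
  simp [sub_eq_add_neg]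

lemma snake_aux (n : ℕ) : ∀ {ι : Type} (s : Finset ι), s.card ≤ n →
    ∀ (t : ι → ℝ) (Y : ℝ → ℝ) (A B : ℝ),
    ContinuousOn Y (Icc A B) → (∀ r ∈ Icc A B, 0 ≤ Y r) → (∀ i ∈ s, t i ∈ Icc A B) →
    ∀ c : ι → ℝ,
    0 ≤ ∑ i ∈ s, ∑ j ∈ s,
        c i * c j * sInf (Y '' Icc (min (t i) (t j)) (max (t i) (t j))) := by
  induction n with
  | zero =>
    intro ι s hs t Y A B hY hYpos ht c
    have : s = ∅ := Finset.card_eq_zero.1 (Nat.le_zero.1 hs)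
    simp [this]
  | succ n IH =>
    intro ι s hs t Y A B hY hYpos ht c
    classical
    rcases s.eq_empty_or_nonempty with rfl | hsne
    · simp
    set tmin := s.inf' hsne t with htmin
    set tmax := s.sup' hsne t with htmax
    have hmm : tmin ≤ tmax := by
      obtain ⟨i, hi⟩ := hsne
      exact le_trans (Finset.inf'_le t hi) (Finset.le_sup' t hi)
    have hIcc : Icc tmin tmax ⊆ Icc A B := by
      apply Icc_subset_Icc
      · exact Finset.le_inf' hsne t fun i hi => (ht i hi).1
      · exact Finset.sup'_le hsne t fun i hi => (ht i hi).2
    have hYc : ContinuousOn Y (Icc tmin tmax) := hY.mono hIcc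
    obtain ⟨r, hr, hrmin⟩ := isCompact_Icc.exists_isMinOn (nonempty_Icc.2 hmm) hYc
    set a := Y r with ha
    have ha0 : 0 ≤ a := hYpos r (hIcc hr)
    have hrm : ∀ x ∈ Icc tmin tmax, a ≤ Y x := fun x hx => hrmin hx
    -- basic facts about the intervals
    have hts : ∀ i ∈ s, t i ∈ Icc tmin tmax := fun i hi =>
      ⟨Finset.inf'_le t hi, Finset.le_sup' t hi⟩
    have hSsub : ∀ i ∈ s, ∀ j ∈ s,
        Icc (min (t i) (t j)) (max (t i) (t j)) ⊆ Icc tmin tmax := by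
      intro i hi j hj
      exact Icc_subset_Icc (le_min (hts i hi).1 (hts j hj).1)
        (max_le (hts i hi).2 (hts j hj).2)
    have hSne : ∀ i j : ι, (Icc (min (t i) (t j)) (max (t i) (t j))).Nonempty :=
      fun i j => nonempty_Icc.2 min_le_max
    have hbdd : ∀ i ∈ s, ∀ j ∈ s,
        BddBelow (Y '' Icc (min (t i) (t j)) (max (t i) (t j))) := by
      intro i hi j hj
      exact ⟨a, fun y ⟨x, hx, hxy⟩ => hxy ▸ hrm x (hSsub i hi j hj hx)⟩
    have hle : ∀ i ∈ s, ∀ j ∈ s,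
        a ≤ sInf (Y '' Icc (min (t i) (t j)) (max (t i) (t j))) := by
      intro i hi j hj
      exact le_csInf ((hSne i j).image Y)
        (fun y ⟨x, hx, hxy⟩ => hxy ▸ hrm x (hSsub i hi j hj hx))
    set Y' : ℝ → ℝ := fun x => Y x - a with hY'
    have hshift : ∀ i ∈ s, ∀ j ∈ s,
        sInf (Y' '' Icc (min (t i) (t j)) (max (t i) (t j)))
          = sInf (Y '' Icc (min (t i) (t j)) (max (t i) (t j))) - a := by
      intro i hi j hj
      have : Y' '' Icc (min (t i) (t j)) (max (t i) (t j))
          = (fun x => x - a) '' (Y '' Icc (min (t i) (t j)) (max (t i) (t j))) := by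
        rw [← image_comp]; rfl
      rw [this, sInf_image_sub _ ((hSne i j).image Y) (hbdd i hi j hj)]
    have hY'pos : ∀ x ∈ Icc tmin tmax, 0 ≤ Y' x := fun x hx => sub_nonneg.2 (hrm x hx)
    have hY'c : ContinuousOn Y' (Icc tmin tmax) := hYc.sub continuousOn_const
    -- decompose the sum
    have hsplit : ∑ i ∈ s, ∑ j ∈ s,
        c i * c j * sInf (Y '' Icc (min (t i) (t j)) (max (t i) (t j)))
        = (∑ i ∈ s, ∑ j ∈ s, c i * c j) * a
          + ∑ i ∈ s, ∑ j ∈ s,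
            c i * c j * sInf (Y' '' Icc (min (t i) (t j)) (max (t i) (t j))) := by
      rw [Finset.sum_mul, ← Finset.sum_add_distrib]
      apply Finset.sum_congr rfl
      intro i hi
      rw [Finset.sum_mul, ← Finset.sum_add_distrib]
      apply Finset.sum_congr rfl
      intro j hj
      rw [hshift i hi j hj]
      ring
    rw [hsplit]
    have h1 : 0 ≤ (∑ i ∈ s, ∑ j ∈ s, c i * c j) * a := by
      rw [← Finset.sum_mul_sum]
      exact mul_nonneg (mul_self_nonneg _) ha0
    have key0 : ∀ i ∈ s, ∀ j ∈ s, r ∈ Icc (min (t i) (t j)) (max (t i) (t j)) →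
        sInf (Y' '' Icc (min (t i) (t j)) (max (t i) (t j))) = 0 := by
      intro i hi j hj hrmem
      rw [hshift i hi j hj]
      have h1 : sInf (Y '' Icc (min (t i) (t j)) (max (t i) (t j))) ≤ a :=
        csInf_le (hbdd i hi j hj) ⟨r, hrmem, rfl⟩
      linarith [hle i hi j hj]
    -- second part nonneg
    have h2 : 0 ≤ ∑ i ∈ s, ∑ j ∈ s,
        c i * c j * sInf (Y' '' Icc (min (t i) (t j)) (max (t i) (t j))) := by
      by_cases hcase : ∃ i0 ∈ s, Y (t i0) = a
      · -- row i0 vanishes; erase it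
        obtain ⟨i0, hi0, hYi0⟩ := hcase
        have hz : ∀ i ∈ s, sInf (Y' '' Icc (min (t i) (t i0)) (max (t i) (t i0))) = 0 := by
          intro i hi
          rw [hshift i hi i0 hi0]
          have hmem : t i0 ∈ Icc (min (t i) (t i0)) (max (t i) (t i0)) :=
            ⟨min_le_right _ _, le_max_right _ _⟩
          have h1 : sInf (Y '' Icc (min (t i) (t i0)) (max (t i) (t i0))) ≤ a := by
            rw [← hYi0]
            exact csInf_le (hbdd i hi i0 hi0) ⟨t i0, hmem, rfl⟩
          linarith [hle i hi i0 hi0]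
        have hz' : ∀ j ∈ s, sInf (Y' '' Icc (min (t i0) (t j)) (max (t i0) (t j))) = 0 := by
          intro j hj
          rw [min_comm, max_comm]
          exact hz j hj
        have hrow : ∑ i ∈ s, ∑ j ∈ s,
            c i * c j * sInf (Y' '' Icc (min (t i) (t j)) (max (t i) (t j)))
            = ∑ i ∈ s.erase i0, ∑ j ∈ s.erase i0,
              c i * c j * sInf (Y' '' Icc (min (t i) (t j)) (max (t i) (t j))) := by
          refine Eq.symm ?_
          calc ∑ i ∈ s.erase i0, ∑ j ∈ s.erase i0,
                c i * c j * sInf (Y' '' Icc (min (t i) (t j)) (max (t i) (t j)))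
              = ∑ i ∈ s.erase i0, ∑ j ∈ s,
                c i * c j * sInf (Y' '' Icc (min (t i) (t j)) (max (t i) (t j))) := by
                refine Finset.sum_congr rfl fun i hi => ?_
                exact Finset.sum_erase s (by rw [hz i (Finset.mem_of_mem_erase hi)]; ring)
            _ = ∑ i ∈ s, ∑ j ∈ s,
                c i * c j * sInf (Y' '' Icc (min (t i) (t j)) (max (t i) (t j))) := by
                exact Finset.sum_erase s (by
                  apply Finset.sum_eq_zero
                  intro j hj
                  rw [hz' j hj]; ring)
        rw [hrow]
        apply IH (s.erase i0) ?_ t Y' tmin tmax hY'c hY'pos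
          (fun i hi => hts i (Finset.mem_of_mem_erase hi)) c
        have := Finset.card_erase_of_mem hi0
        omega
      · -- strict: Y (t i) > a for all i; split at r
        push_neg at hcase
        have hne' : ∀ i ∈ s, t i ≠ r := by
          intro i hi h
          exact hcase i hi (by rw [h])
        set L := s.filter (fun i => t i < r) with hL
        set R := s.filter (fun i => r < t i) with hR
        have hdisj : Disjoint L R := by
          rw [Finset.disjoint_left]
          intro i hiL hiR
          rw [hL, Finset.mem_filter] at hiL
          rw [hR, Finset.mem_filter] at hiR
          linarith [hiL.2, hiR.2]
        have hunion : s = L ∪ R := by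
          ext i
          simp only [hL, hR, Finset.mem_union, Finset.mem_filter]
          constructor
          · intro hi
            rcases (hne' i hi).lt_or_gt with h | h
            · exact Or.inl ⟨hi, h⟩
            · exact Or.inr ⟨hi, h⟩
          · rintro (⟨hi, -⟩ | ⟨hi, -⟩) <;> exact hi
        have hLs : L ⊆ s := by rw [hL]; exact Finset.filter_subset _ _
        have hRs : R ⊆ s := by rw [hR]; exact Finset.filter_subset _ _
        have hLne : L.Nonempty := by
          obtain ⟨i1, hi1, hmin⟩ := Finset.exists_mem_eq_inf' hsne t
          refine ⟨i1, ?_⟩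
          rw [hL, Finset.mem_filter]
          refine ⟨hi1, lt_of_le_of_ne ?_ (hne' i1 hi1)⟩
          rw [← hmin]
          exact hr.1
        have hRne : R.Nonempty := by
          obtain ⟨i1, hi1, hmax⟩ := Finset.exists_mem_eq_sup' hsne t
          refine ⟨i1, ?_⟩
          rw [hR, Finset.mem_filter]
          refine ⟨hi1, lt_of_le_of_ne ?_ (Ne.symm (hne' i1 hi1))⟩
          rw [← hmax]
          exact hr.2
        have hLcard : L.card ≤ n := by
          obtain ⟨i2, hi2⟩ := hRne
          have : L ⊂ s := by
            refine Finset.ssubset_iff_of_subset hLs |>.2 ⟨i2, hRs hi2, ?_⟩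
            exact Finset.disjoint_right.1 hdisj hi2
          have := Finset.card_lt_card this
          omega
        have hRcard : R.card ≤ n := by
          obtain ⟨i2, hi2⟩ := hLne
          have : R ⊂ s := by
            refine Finset.ssubset_iff_of_subset hRs |>.2 ⟨i2, hLs hi2, ?_⟩
            exact Finset.disjoint_left.1 hdisj hi2
          have := Finset.card_lt_card this
          omega
        have hLR : ∀ i ∈ L, ∑ j ∈ R, c i * c j * sInf (Y' '' Icc (min (t i) (t j)) (max (t i) (t j))) = 0 := by
          intro i hi
          apply Finset.sum_eq_zero
          intro j hj
          have hiL := (Finset.mem_filter.1 (hL ▸ hi)).2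
          have hjR := (Finset.mem_filter.1 (hR ▸ hj)).2
          rw [key0 i (hLs hi) j (hRs hj) ⟨le_of_lt (lt_of_le_of_lt (min_le_left _ _) hiL),
            le_of_lt (lt_of_lt_of_le hjR (le_max_right _ _))⟩]
          ring
        have hRL : ∀ i ∈ R, ∑ j ∈ L, c i * c j * sInf (Y' '' Icc (min (t i) (t j)) (max (t i) (t j))) = 0 := by
          intro i hi
          apply Finset.sum_eq_zero
          intro j hj
          have hiR := (Finset.mem_filter.1 (hR ▸ hi)).2
          have hjL := (Finset.mem_filter.1 (hL ▸ hj)).2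
          rw [key0 i (hRs hi) j (hLs hj) ⟨le_of_lt (lt_of_le_of_lt (min_le_right _ _) hjL),
            le_of_lt (lt_of_lt_of_le hiR (le_max_left _ _))⟩]
          ring
        have hdecomp : ∑ i ∈ s, ∑ j ∈ s,
            c i * c j * sInf (Y' '' Icc (min (t i) (t j)) (max (t i) (t j)))
            = (∑ i ∈ L, ∑ j ∈ L,
                c i * c j * sInf (Y' '' Icc (min (t i) (t j)) (max (t i) (t j))))
              + ∑ i ∈ R, ∑ j ∈ R,
                c i * c j * sInf (Y' '' Icc (min (t i) (t j)) (max (t i) (t j))) := by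
          rw [hunion, Finset.sum_union hdisj]
          congr 1
          · refine Finset.sum_congr rfl fun i hi => ?_
            rw [Finset.sum_union hdisj, hLR i hi, add_zero]
          · refine Finset.sum_congr rfl fun i hi => ?_
            rw [Finset.sum_union hdisj, hRL i hi, zero_add]
        rw [hdecomp]
        have hgL := IH L hLcard t Y' tmin tmax hY'c hY'pos (fun i hi => hts i (hLs hi)) c
        have hgR := IH R hRcard t Y' tmin tmax hY'c hY'pos (fun i hi => hts i (hRs hi)) c
        linarith
    linarith

/-- For continuous `Y : [0,T] → [0,∞)`, the kernel `K(s,t) = inf{Y r : r ∈ [s∧t, s∨t]}` is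
symmetric and positive semidefinite on `[0,T]`. -/
theorem brownian_snake_kernel_posSemidef (T : ℝ) (hT : 0 ≤ T) (Y : ℝ → ℝ)
    (hY : ContinuousOn Y (Icc 0 T)) (hYpos : ∀ r ∈ Icc 0 T, 0 ≤ Y r)
    (K : ℝ → ℝ → ℝ)
    (hK : ∀ s t, K s t = sInf (Y '' Icc (min s t) (max s t))) :
    (∀ s ∈ Icc 0 T, ∀ t ∈ Icc 0 T, K s t = K t s) ∧
    (∀ (n : ℕ) (t : Fin n → ℝ), (∀ i, t i ∈ Icc 0 T) → ∀ c : Fin n → ℝ,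
      0 ≤ ∑ i, ∑ j, c i * c j * K (t i) (t j)) := by
  constructor
  · intro s _ t _
    rw [hK, hK, min_comm, max_comm]
  · intro n t ht c
    simp only [hK]
    exact snake_aux n Finset.univ (by simp) t Y 0 T hY hYpos (fun i _ => ht i) c
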